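/- arXiv:1306.0691 — 6 statements merged into one kernel-verified Lean document; each statement's English description precedes it below -/
import Mathlib

section
/- For every α in (0,2) with α ≠ 1, the improper integral ∫₀^∞ (sin x)/x^α dx converges and equals Γ(1-α)·cos(πα/2). -/
/-!
For `x > 0`, `Γ(α) x^(-α) = ∫₀^∞ t^(α-1) e^(-xt) dt`. Substituting this into `∫₀^T sin x / x^α`
and exchanging the order of integration (absolutely convergent for `α < 2` because
`|sin x| ≤ x`) gives `Γ(α) ∫₀^T sin x / x^α dx = ∫₀^∞ t^(α-1) ∫₀^T e^(-tx) sin x dx dt`.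
The inner integral is elementary: it tends to `1/(1+t²)` and is bounded by `2/(1+t²)` for
`T ≥ 1`, so by dominated convergence the limit is the Mellin integral `∫₀^∞ t^(α-1)/(1+t²) dt`.
Writing `1/(1+t²) = ∫₀^∞ e^(-(1+t²)s) ds` and using Fubini once more, this integral equals
`Γ(α/2) Γ(1-α/2) / 2 = π / (2 sin(πα/2))`, and the reflection formula
`Γ(α) Γ(1-α) = π / sin(πα)` identifies it with `Γ(α) Γ(1-α) cos(πα/2)`.
-/

open Real Filter intervalIntegral

open MeasureTheory Set Asymptotics Topology

theorem integral_exp_neg_mul_mul_sin (t T : ℝ) :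
    ∫ x in (0:ℝ)..T, exp (-(t * x)) * sin x
      = (1 - exp (-(t * T)) * (cos T + t * sin T)) / (1 + t ^ 2) := by
  have h1t : (1 : ℝ) + t ^ 2 ≠ 0 := by positivity
  have hderiv : ∀ x ∈ uIcc (0:ℝ) T,
      HasDerivAt (fun x => -(exp (-(t * x)) * (cos x + t * sin x)) / (1 + t ^ 2))
        (exp (-(t * x)) * sin x) x := by
    intro x _
    have hexp : HasDerivAt (fun x => exp (-(t * x))) (exp (-(t * x)) * -t) x := by
      simpa using ((hasDerivAt_id x).const_mul t).neg.exp
    have htrig : HasDerivAt (fun x => cos x + t * sin x) (-sin x + t * cos x) x :=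
      (hasDerivAt_cos x).add ((hasDerivAt_sin x).const_mul t)
    refine (((hexp.mul htrig).neg).div_const (1 + t ^ 2)).congr_deriv ?_
    rw [div_eq_iff h1t]
    ring
  rw [integral_eq_sub_of_hasDerivAt hderiv (Continuous.intervalIntegrable (by fun_prop) _ _)]
  simp only [mul_zero, neg_zero, exp_zero, sin_zero, cos_zero]
  ring

theorem abs_exp_neg_mul_mul_cos_add_mul_sin_le {t : ℝ} (ht : 0 ≤ t) (T : ℝ) :
    |exp (-(t * T)) * (cos T + t * sin T)| ≤ exp (-(t * T)) * (1 + t) := by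
  rw [abs_mul, abs_exp]
  gcongr
  calc |cos T + t * sin T| ≤ |cos T| + t * |sin T| := by
        simpa [abs_mul, abs_of_nonneg ht] using abs_add_le (cos T) (t * sin T)
    _ ≤ 1 + t * 1 := by gcongr <;> simp only [abs_cos_le_one, abs_sin_le_one]
    _ = 1 + t := by ring

theorem abs_integral_exp_neg_mul_mul_sin_le {t T : ℝ} (ht : 0 ≤ t) (hT : 1 ≤ T) :
    |∫ x in (0:ℝ)..T, exp (-(t * x)) * sin x| ≤ 2 * (1 + t ^ 2)⁻¹ := by
  have hsmall : exp (-(t * T)) * (1 + t) ≤ 1 :=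
    calc exp (-(t * T)) * (1 + t) ≤ exp (-(t * T)) * exp t := by
          gcongr; linarith [add_one_le_exp t]
      _ = exp (-(t * (T - 1))) := by rw [← exp_add]; ring_nf
      _ ≤ 1 := exp_le_one_iff.2 (by nlinarith)
  rw [integral_exp_neg_mul_mul_sin, abs_div, abs_of_pos (by positivity : (0:ℝ) < 1 + t ^ 2),
    div_eq_mul_inv]
  gcongr
  calc |1 - exp (-(t * T)) * (cos T + t * sin T)|
      ≤ |1| + |exp (-(t * T)) * (cos T + t * sin T)| := abs_sub _ _
    _ ≤ 2 := by linarith [abs_one (α := ℝ), abs_exp_neg_mul_mul_cos_add_mul_sin_le ht T]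

theorem tendsto_integral_exp_neg_mul_mul_sin {t : ℝ} (ht : 0 < t) :
    Tendsto (fun T => ∫ x in (0:ℝ)..T, exp (-(t * x)) * sin x) atTop (𝓝 (1 + t ^ 2)⁻¹) := by
  have hdecay : Tendsto (fun T => exp (-(t * T)) * (1 + t)) atTop (𝓝 0) := by
    simpa using (tendsto_exp_neg_atTop_nhds_zero.comp
      (tendsto_id.const_mul_atTop ht)).mul_const (1 + t)
  have hE : Tendsto (fun T => exp (-(t * T)) * (cos T + t * sin T)) atTop (𝓝 0) :=
    squeeze_zero_norm (abs_exp_neg_mul_mul_cos_add_mul_sin_le ht.le) hdecay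
  simp_rw [integral_exp_neg_mul_mul_sin]
  simpa [div_eq_mul_inv] using (hE.const_sub 1).div_const (1 + t ^ 2)

theorem integrableOn_rpow_mul_inv_one_add_sq {s : ℝ} (hs0 : 0 < s) (hs2 : s < 2) :
    IntegrableOn (fun t : ℝ => t ^ (s - 1) * (1 + t ^ 2)⁻¹) (Ioi 0) := by
  have hcont : Continuous fun t : ℝ => (1 + t ^ 2)⁻¹ :=
    (continuous_const.add (continuous_pow 2)).inv₀ fun t => (by positivity : (0:ℝ) < 1 + t ^ 2).ne'
  refine mellin_convergent_of_isBigO_scalar (a := 2) (b := 0)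
    (hcont.locallyIntegrable.locallyIntegrableOn _) ?_ hs2 ?_ hs0
  · refine IsBigO.of_bound 1 ?_
    filter_upwards [eventually_gt_atTop 0] with t ht
    rw [one_mul, norm_inv, norm_of_nonneg (by positivity), norm_of_nonneg (by positivity),
      rpow_neg ht.le, rpow_two]
    gcongr
    linarith
  · refine IsBigO.of_bound 1 (Eventually.of_forall fun t => ?_)
    rw [neg_zero, rpow_zero, norm_one, one_mul, norm_inv, norm_of_nonneg (by positivity)]
    exact inv_le_one_of_one_le₀ (by nlinarith)

theorem integral_rpow_mul_exp_neg_one_add_sq_mul {α s : ℝ} (hα : 0 < α) (hs : 0 < s) :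
    ∫ t in Ioi (0:ℝ), t ^ (α - 1) * exp (-((1 + t ^ 2) * s))
      = exp (-s) * (s ^ (-(α / 2)) * (1 / 2) * Gamma (α / 2)) := by
  have hgauss := integral_rpow_mul_exp_neg_mul_rpow two_pos (by linarith : -1 < α - 1) hs
  rw [sub_add_cancel, neg_div] at hgauss
  rw [← hgauss, ← MeasureTheory.integral_const_mul]
  refine setIntegral_congr_fun measurableSet_Ioi fun t _ => ?_
  rw [rpow_two, mul_left_comm, ← exp_add]
  ring_nf

theorem integral_rpow_mul_inv_one_add_sq {α : ℝ} (hα0 : 0 < α) (hα2 : α < 2) :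
    ∫ t in Ioi (0:ℝ), t ^ (α - 1) * (1 + t ^ 2)⁻¹ = π / (2 * sin (π * α / 2)) := by
  let g : ℝ → ℝ → ℝ := fun t s => t ^ (α - 1) * exp (-((1 + t ^ 2) * s))
  have hlaplace : ∀ t : ℝ, ∫ s in Ioi (0:ℝ), g t s = t ^ (α - 1) * (1 + t ^ 2)⁻¹ := fun t => by
    simp_rw [g, MeasureTheory.integral_const_mul, ← neg_mul,
      integral_exp_mul_Ioi (by nlinarith : -(1 + t ^ 2) < 0) 0, mul_zero, exp_zero,
      neg_div_neg_eq, one_div]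
  have hint : Integrable (Function.uncurry g)
      ((volume.restrict (Ioi 0)).prod (volume.restrict (Ioi 0))) := by
    have hmeas : Measurable (Function.uncurry g) := by fun_prop
    refine (integrable_prod_iff hmeas.aestronglyMeasurable).2
      ⟨Eventually.of_forall fun t => ?_, ?_⟩
    · have h := (integrableOn_exp_mul_Ioi (by nlinarith : -(1 + t ^ 2) < 0) 0).const_mul
        (t ^ (α - 1))
      simp only [neg_mul] at h
      exact h
    · refine (integrableOn_rpow_mul_inv_one_add_sq hα0 hα2).congr_fun (fun t ht => ?_)
        measurableSet_Ioi
      beta_reduce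
      rw [← hlaplace]
      refine setIntegral_congr_fun measurableSet_Ioi fun s _ => ?_
      exact (norm_of_nonneg (by have : (0:ℝ) < t := ht; positivity)).symm
  calc ∫ t in Ioi (0:ℝ), t ^ (α - 1) * (1 + t ^ 2)⁻¹
      = ∫ t in Ioi (0:ℝ), ∫ s in Ioi (0:ℝ), g t s := by simp_rw [hlaplace]
    _ = ∫ s in Ioi (0:ℝ), ∫ t in Ioi (0:ℝ), g t s := integral_integral_swap hint
    _ = ∫ s in Ioi (0:ℝ), exp (-s) * s ^ ((1 - α / 2) - 1) * (Gamma (α / 2) / 2) := by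
        refine setIntegral_congr_fun measurableSet_Ioi fun s hs => ?_
        rw [integral_rpow_mul_exp_neg_one_add_sq_mul hα0 hs]
        ring_nf
    _ = Gamma (1 - α / 2) * Gamma (α / 2) / 2 := by
        rw [MeasureTheory.integral_mul_const, ← Gamma_eq_integral (by linarith), mul_div_assoc]
    _ = π / (2 * sin (π * α / 2)) := by
        rw [mul_comm (Gamma _), Gamma_mul_Gamma_one_sub, div_div, mul_div_assoc, mul_comm 2]

theorem Gamma_mul_integral_sin_div_rpow {α T : ℝ} (hα0 : 0 < α) (hα2 : α < 2) (hT : 0 ≤ T) :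
    Gamma α * ∫ x in (0:ℝ)..T, sin x / x ^ α
      = ∫ t in Ioi (0:ℝ), t ^ (α - 1) * ∫ x in (0:ℝ)..T, exp (-(t * x)) * sin x := by
  let f : ℝ → ℝ → ℝ := fun x t => t ^ (α - 1) * (exp (-(t * x)) * sin x)
  have hlaplace : ∀ x ∈ Ioc (0:ℝ) T,
      ∫ t in Ioi (0:ℝ), t ^ (α - 1) * exp (-(t * x)) = Gamma α * x ^ (-α) := fun x hx => by
    simp_rw [mul_comm _ x, integral_rpow_mul_exp_neg_mul_Ioi hα0 hx.1, one_div, inv_rpow hx.1.le,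
      rpow_neg hx.1.le, mul_comm]
  have hint : Integrable (Function.uncurry f)
      ((volume.restrict (Ioc 0 T)).prod (volume.restrict (Ioi 0))) := by
    have hmeas : Measurable (Function.uncurry f) := by fun_prop
    refine (integrable_prod_iff hmeas.aestronglyMeasurable).2 ⟨?_, ?_⟩
    · refine (ae_restrict_iff' measurableSet_Ioc).2 (Eventually.of_forall fun x hx => ?_)
      have h := (integrableOn_rpow_mul_exp_neg_mul_rpow (by linarith : -1 < α - 1) one_pos
        hx.1).mul_const (sin x)
      simp only [rpow_one, mul_assoc, neg_mul, mul_comm x] at h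
      exact h
    · have hbound : IntegrableOn (fun x : ℝ => Gamma α * x ^ (1 - α)) (Ioc 0 T) :=
        (intervalIntegrable_iff_integrableOn_Ioc_of_le hT).1
          ((intervalIntegrable_rpow' (by linarith)).const_mul _)
      refine hbound.mono' (hmeas.norm.stronglyMeasurable.integral_prod_right'.aestronglyMeasurable)
        ((ae_restrict_iff' measurableSet_Ioc).2 (Eventually.of_forall fun x hx => ?_))
      have hx0 : 0 < x := hx.1
      have hnorm : ∫ t in Ioi (0:ℝ), ‖f x t‖ = |sin x| * (Gamma α * x ^ (-α)) := by
        rw [← hlaplace x hx, ← MeasureTheory.integral_const_mul]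
        refine setIntegral_congr_fun measurableSet_Ioi fun t ht => ?_
        rw [norm_mul, norm_mul, norm_of_nonneg (rpow_nonneg (le_of_lt ht) _),
          norm_of_nonneg (exp_pos _).le, Real.norm_eq_abs]
        ring
      calc ‖∫ t in Ioi (0:ℝ), ‖Function.uncurry f (x, t)‖‖
          = |sin x| * (Gamma α * x ^ (-α)) := by
            rw [← hnorm, norm_of_nonneg (integral_nonneg fun _ => norm_nonneg _)]; rfl
        _ ≤ x * (Gamma α * x ^ (-α)) := by
            gcongr
            exact abs_sin_le_abs.trans (abs_of_pos hx0).le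
        _ = Gamma α * x ^ (1 - α) := by
            rw [rpow_sub hx0, rpow_one, rpow_neg hx0.le]; ring
  calc Gamma α * ∫ x in (0:ℝ)..T, sin x / x ^ α
      = ∫ x in Ioc (0:ℝ) T, ∫ t in Ioi (0:ℝ), f x t := by
        rw [integral_of_le hT, ← MeasureTheory.integral_const_mul]
        refine setIntegral_congr_fun measurableSet_Ioc fun x hx => ?_
        simp_rw [f, ← mul_assoc, MeasureTheory.integral_mul_const, hlaplace x hx,
          rpow_neg hx.1.le, div_eq_mul_inv]
        ring
    _ = ∫ t in Ioi (0:ℝ), ∫ x in Ioc (0:ℝ) T, f x t := integral_integral_swap hint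
    _ = ∫ t in Ioi (0:ℝ), t ^ (α - 1) * ∫ x in (0:ℝ)..T, exp (-(t * x)) * sin x := by
        simp_rw [f, MeasureTheory.integral_const_mul, integral_of_le hT]

theorem tendsto_integral_rpow_mul_integral_exp_neg_mul_mul_sin {α : ℝ} (hα0 : 0 < α)
    (hα2 : α < 2) :
    Tendsto (fun T => ∫ t in Ioi (0:ℝ), t ^ (α - 1) * ∫ x in (0:ℝ)..T, exp (-(t * x)) * sin x)
      atTop (𝓝 (∫ t in Ioi (0:ℝ), t ^ (α - 1) * (1 + t ^ 2)⁻¹)) := by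
  refine tendsto_integral_filter_of_dominated_convergence
    (fun t => 2 * (t ^ (α - 1) * (1 + t ^ 2)⁻¹)) (Eventually.of_forall fun T => ?_) ?_
    ((integrableOn_rpow_mul_inv_one_add_sq hα0 hα2).const_mul 2) ?_
  · simp_rw [integral_exp_neg_mul_mul_sin]
    exact (by fun_prop : Measurable _).aestronglyMeasurable
  · filter_upwards [eventually_ge_atTop 1] with T hT
    refine (ae_restrict_iff' measurableSet_Ioi).2 (Eventually.of_forall fun t ht => ?_)
    rw [norm_mul, norm_of_nonneg (rpow_nonneg (le_of_lt ht) _), Real.norm_eq_abs, mul_left_comm 2]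
    exact mul_le_mul_of_nonneg_left (abs_integral_exp_neg_mul_mul_sin_le (le_of_lt ht) hT)
      (rpow_nonneg (le_of_lt ht) _)
  · refine (ae_restrict_iff' measurableSet_Ioi).2 (Eventually.of_forall fun t ht => ?_)
    exact (tendsto_integral_exp_neg_mul_mul_sin ht).const_mul _

theorem cos_pi_mul_div_two_ne_zero {α : ℝ} (hα0 : 0 < α) (hα2 : α < 2) (hα1 : α ≠ 1) :
    cos (π * α / 2) ≠ 0 := by
  rcases hα1.lt_or_gt with hlt | hgt
  · exact (cos_pos_of_mem_Ioo ⟨by nlinarith [pi_pos], by nlinarith [pi_pos]⟩).ne'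
  · exact (cos_neg_of_pi_div_two_lt_of_lt (by nlinarith [pi_pos]) (by nlinarith [pi_pos])).ne

theorem Gamma_mul_Gamma_one_sub_mul_cos {α : ℝ} (hcos : cos (π * α / 2) ≠ 0) :
    Gamma α * (Gamma (1 - α) * cos (π * α / 2)) = π / (2 * sin (π * α / 2)) := by
  have hsin : sin (π * α) = 2 * sin (π * α / 2) * cos (π * α / 2) := by
    rw [← sin_two_mul]; ring_nf
  rw [← mul_assoc, Gamma_mul_Gamma_one_sub, hsin, div_mul_eq_mul_div, mul_div_mul_right _ _ hcos]

theorem stable_sine_integral (α : ℝ) (hα0 : 0 < α) (hα2 : α < 2) (hα1 : α ≠ 1) :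
    Tendsto (fun T : ℝ => ∫ x in (0:ℝ)..T, Real.sin x / x ^ α) atTop
      (nhds (Real.Gamma (1 - α) * Real.cos (Real.pi * α / 2))) := by
  have hlim : Tendsto (fun T => Gamma α * ∫ x in (0:ℝ)..T, sin x / x ^ α) atTop
      (𝓝 (Gamma α * (Gamma (1 - α) * cos (π * α / 2)))) := by
    rw [Gamma_mul_Gamma_one_sub_mul_cos (cos_pi_mul_div_two_ne_zero hα0 hα2 hα1),
      ← integral_rpow_mul_inv_one_add_sq hα0 hα2]
    refine (tendsto_integral_rpow_mul_integral_exp_neg_mul_mul_sin hα0 hα2).congr' ?_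
    filter_upwards [eventually_ge_atTop 0] with T hT
    exact (Gamma_mul_integral_sin_div_rpow hα0 hα2 hT).symm
  exact (tendsto_const_smul_iff₀ (Gamma_pos_of_pos hα0).ne').1 hlim
end

section
/- Let α ∈ (0,2). For every ξ > 0 and every x_m > 0, one has 0 ≤ ∫₀^{ξ·x_m} (sin x)/x^α dx ≤ ∫₀^π (sin x)/x^α dx. -/
open Real intervalIntegral MeasureTheory

lemma sine_intble {α : ℝ} (hα0 : 0 < α) (hα2 : α < 2) {c a b : ℝ} (hc : 0 ≤ c)
    (ha : 0 ≤ a) (hab : a ≤ b) :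
    IntervalIntegrable (fun x => Real.sin x / (x + c) ^ α) volume a b := by
  have hdom : IntervalIntegrable (fun x => (x + c) ^ (1 - α)) volume a b := by
    have h := (intervalIntegrable_rpow' (a := a + c) (b := b + c) (r := 1 - α)
      (by linarith)).comp_add_right c
    simpa using h
  apply hdom.mono_fun'
  · exact (Real.measurable_sin.div
      (((Real.continuous_rpow_const hα0.le).measurable).comp
        (measurable_id.add_const c))).aestronglyMeasurable
  · rw [Set.uIoc_of_le hab]
    filter_upwards [ae_restrict_mem measurableSet_Ioc] with x hx
    have hx0 : 0 < x := lt_of_le_of_lt ha hx.1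
    have hxc : 0 < x + c := by linarith
    have h1 : |Real.sin x| ≤ x + c := by
      have := Real.abs_sin_le_abs (x := x)
      rw [abs_of_pos hx0] at this
      linarith
    have h2 : (0:ℝ) < (x + c) ^ α := Real.rpow_pos_of_pos hxc α
    rw [Real.norm_eq_abs, abs_div, abs_of_pos h2, div_le_iff₀ h2, Real.rpow_sub hxc,
      div_mul_eq_mul_div, Real.rpow_one, mul_div_assoc, div_self h2.ne', mul_one]
    exact h1

/-- Integral of one full period is nonnegative. -/
lemma sine_hump {α : ℝ} (hα0 : 0 < α) (hα2 : α < 2) {c : ℝ} (hc : 0 ≤ c) :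
    0 ≤ ∫ x in (0:ℝ)..(2 * π), Real.sin x / (x + c) ^ α := by
  have hπ := Real.pi_pos
  have hI1 : IntervalIntegrable (fun x => Real.sin x / (x + c) ^ α) volume 0 π :=
    sine_intble hα0 hα2 hc le_rfl hπ.le
  have hI2 : IntervalIntegrable (fun x => Real.sin x / (x + c) ^ α) volume π (2 * π) :=
    sine_intble hα0 hα2 hc hπ.le (by linarith)
  rw [← integral_add_adjacent_intervals hI1 hI2]
  have hshift : (∫ x in π..(2 * π), Real.sin x / (x + c) ^ α)
      = ∫ x in (0:ℝ)..π, -(Real.sin x / (x + (c + π)) ^ α) := by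
    have := integral_comp_add_right (a := (0:ℝ)) (b := π)
      (fun x => Real.sin x / (x + c) ^ α) π
    rw [zero_add] at this
    rw [show (2:ℝ) * π = π + π by ring, ← this]
    congr 1
    ext x
    rw [Real.sin_add_pi]
    ring_nf
  rw [hshift]
  have hIB : IntervalIntegrable (fun x => Real.sin x / (x + (c + π)) ^ α) volume 0 π :=
    sine_intble hα0 hα2 (by linarith) le_rfl hπ.le
  rw [intervalIntegral.integral_neg, ← sub_eq_add_neg, sub_nonneg]
  apply intervalIntegral.integral_mono_on hπ.le hIB hI1
  intro x hx
  rcases eq_or_lt_of_le hx.1 with h | h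
  · simp [← h]
  · have hsin : 0 ≤ Real.sin x := Real.sin_nonneg_of_nonneg_of_le_pi hx.1 hx.2
    have hxc : 0 < x + c := by linarith
    apply div_le_div_of_nonneg_left hsin (Real.rpow_pos_of_pos hxc α)
    exact Real.rpow_le_rpow hxc.le (by linarith) hα0.le

/-- The partial integral `∫_0^S sin x / (x+c)^α` is nonnegative for `S ≤ 2π`. -/
lemma sine_base {α : ℝ} (hα0 : 0 < α) (hα2 : α < 2) {c S : ℝ} (hc : 0 ≤ c)
    (hS0 : 0 ≤ S) (hS2 : S ≤ 2 * π) :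
    0 ≤ ∫ x in (0:ℝ)..S, Real.sin x / (x + c) ^ α := by
  have hπ := Real.pi_pos
  by_cases hSπ : S ≤ π
  · apply intervalIntegral.integral_nonneg hS0
    intro x hx
    exact div_nonneg (Real.sin_nonneg_of_nonneg_of_le_pi hx.1 (hx.2.trans hSπ))
      (Real.rpow_nonneg (by linarith [hx.1]) α)
  · push_neg at hSπ
    have hI1 : IntervalIntegrable (fun x => Real.sin x / (x + c) ^ α) volume 0 S :=
      sine_intble hα0 hα2 hc le_rfl hS0
    have hI2 : IntervalIntegrable (fun x => Real.sin x / (x + c) ^ α) volume S (2 * π) :=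
      sine_intble hα0 hα2 hc hS0 hS2
    have key := integral_add_adjacent_intervals hI1 hI2
    have htail : (∫ x in S..(2 * π), Real.sin x / (x + c) ^ α) ≤ 0 := by
      have hneg : 0 ≤ ∫ x in S..(2 * π), -(Real.sin x / (x + c) ^ α) := by
        apply intervalIntegral.integral_nonneg hS2
        intro x hx
        rw [neg_nonneg]
        have hx1 : π ≤ x := hSπ.le.trans hx.1
        have hsin : Real.sin x ≤ 0 := by
          have h0 : 0 ≤ Real.sin (x - π) :=
            Real.sin_nonneg_of_nonneg_of_le_pi (by linarith) (by linarith [hx.2])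
          rw [Real.sin_sub_pi] at h0
          linarith
        exact div_nonpos_of_nonpos_of_nonneg hsin
          (Real.rpow_nonneg (by linarith [hSπ, hx.1]) α)
      rw [intervalIntegral.integral_neg] at hneg
      linarith
    have := sine_hump hα0 hα2 hc (α := α)
    linarith [key]

lemma sine_nonneg_aux {α : ℝ} (hα0 : 0 < α) (hα2 : α < 2) :
    ∀ n : ℕ, ∀ c S : ℝ, 0 ≤ c → 0 ≤ S → S ≤ 2 * π * (n + 1) →
      0 ≤ ∫ x in (0:ℝ)..S, Real.sin x / (x + c) ^ α := by
  have hπ := Real.pi_pos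
  intro n
  induction n with
  | zero =>
    intro c S hc hS0 hS2
    exact sine_base hα0 hα2 hc hS0 (by push_cast at hS2; linarith)
  | succ n ih =>
    intro c S hc hS0 hS2
    by_cases h2 : S ≤ 2 * π
    · exact sine_base hα0 hα2 hc hS0 h2
    · push_neg at h2
      have hI1 : IntervalIntegrable (fun x => Real.sin x / (x + c) ^ α) volume 0 (2 * π) :=
        sine_intble hα0 hα2 hc le_rfl (by linarith)
      have hI2 : IntervalIntegrable (fun x => Real.sin x / (x + c) ^ α) volume (2 * π) S :=
        sine_intble hα0 hα2 hc (by linarith) h2.le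
      rw [← integral_add_adjacent_intervals hI1 hI2]
      have hshift : (∫ x in (2 * π)..S, Real.sin x / (x + c) ^ α)
          = ∫ x in (0:ℝ)..(S - 2 * π), Real.sin x / (x + (c + 2 * π)) ^ α := by
        have := integral_comp_add_right (a := (0:ℝ)) (b := S - 2 * π)
          (fun x => Real.sin x / (x + c) ^ α) (2 * π)
        rw [zero_add, sub_add_cancel] at this
        rw [← this]
        congr 1
        ext x
        rw [Real.sin_add_two_pi]
        ring_nf
      have htail : 0 ≤ ∫ x in (0:ℝ)..(S - 2 * π), Real.sin x / (x + (c + 2 * π)) ^ α :=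
        ih (c + 2 * π) (S - 2 * π) (by linarith) (by linarith)
          (by push_cast; push_cast at hS2; linarith)
      have hhead := sine_hump hα0 hα2 hc (α := α)
      rw [hshift]
      linarith

theorem sine_integral_bounds (α : ℝ) (hα0 : 0 < α) (hα2 : α < 2)
    (ξ xm : ℝ) (hξ : 0 < ξ) (hxm : 0 < xm) :
    0 ≤ ∫ x in (0:ℝ)..(ξ * xm), Real.sin x / x ^ α ∧
    (∫ x in (0:ℝ)..(ξ * xm), Real.sin x / x ^ α) ≤
      ∫ x in (0:ℝ)..Real.pi, Real.sin x / x ^ α := by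
  have hπ := Real.pi_pos
  set T := ξ * xm with hT
  have hT0 : 0 < T := mul_pos hξ hxm
  have hfun : (fun x => Real.sin x / (x + 0) ^ α) = fun x => Real.sin x / x ^ α := by
    ext x; rw [add_zero]
  have hNN : ∀ S : ℝ, 0 ≤ S → 0 ≤ ∫ x in (0:ℝ)..S, Real.sin x / x ^ α := by
    intro S hS0
    obtain ⟨n, hn⟩ := exists_nat_ge (S / (2 * π))
    have hS2 : S ≤ 2 * π * (n + 1) := by
      have : S / (2 * π) ≤ n := hn
      rw [div_le_iff₀ (by linarith)] at this
      nlinarith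
    have := sine_nonneg_aux hα0 hα2 n 0 S le_rfl hS0 hS2
    rwa [hfun] at this
  constructor
  · exact hNN T hT0.le
  · by_cases hTπ : T ≤ π
    · have hI1 : IntervalIntegrable (fun x => Real.sin x / x ^ α) volume 0 T := by
        rw [← hfun]; exact sine_intble hα0 hα2 le_rfl le_rfl hT0.le
      have hI2 : IntervalIntegrable (fun x => Real.sin x / x ^ α) volume T π := by
        rw [← hfun]; exact sine_intble hα0 hα2 le_rfl hT0.le hTπ
      rw [← integral_add_adjacent_intervals hI1 hI2]
      have : 0 ≤ ∫ x in T..π, Real.sin x / x ^ α := by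
        apply intervalIntegral.integral_nonneg hTπ
        intro x hx
        exact div_nonneg
          (Real.sin_nonneg_of_nonneg_of_le_pi (hT0.le.trans hx.1) hx.2)
          (Real.rpow_nonneg (hT0.le.trans hx.1) α)
      linarith
    · push_neg at hTπ
      have hI1 : IntervalIntegrable (fun x => Real.sin x / x ^ α) volume 0 π := by
        rw [← hfun]; exact sine_intble hα0 hα2 le_rfl le_rfl hπ.le
      have hI2 : IntervalIntegrable (fun x => Real.sin x / x ^ α) volume π T := by
        rw [← hfun]; exact sine_intble hα0 hα2 le_rfl hπ.le hTπ.le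
      rw [← integral_add_adjacent_intervals hI1 hI2]
      have hshift : (∫ x in π..T, Real.sin x / x ^ α)
          = ∫ x in (0:ℝ)..(T - π), -(Real.sin x / (x + π) ^ α) := by
        have := integral_comp_add_right (a := (0:ℝ)) (b := T - π)
          (fun x => Real.sin x / x ^ α) π
        rw [zero_add, sub_add_cancel] at this
        rw [← this]
        congr 1
        ext x
        rw [Real.sin_add_pi]
        ring_nf
      have htail : 0 ≤ ∫ x in (0:ℝ)..(T - π), Real.sin x / (x + π) ^ α := by
        obtain ⟨n, hn⟩ := exists_nat_ge ((T - π) / (2 * π))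
        have hS2 : T - π ≤ 2 * π * (n + 1) := by
          have : (T - π) / (2 * π) ≤ n := hn
          rw [div_le_iff₀ (by linarith)] at this
          nlinarith
        exact sine_nonneg_aux hα0 hα2 n π (T - π) hπ.le (by linarith) hS2
      rw [hshift, intervalIntegral.integral_neg]
      linarith
end

section
/- Let Y be a real random variable with characteristic function φ_Y. Then for all C > 0 and Δ > 0, P(|Y| > C) ≤ (1/Δ)·(1 + 2π/(CΔ))² · ∫₀^Δ (1 − Re φ_Y(u)) du. -/
/-!
Integrating `1 - cos (u * Y)` over `u ∈ [0, Δ]` and swapping the integrals turns the right-hand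
side into `(1 + 2π/(CΔ))² · E[1 - sinc (ΔY)]`. The elementary inequality
`t³ ≤ (t + 2π)² (t - sin t)` for `t ≥ 0` says that this integrand is at least `1` wherever
`|Y| > C`, so Markov's inequality concludes.
-/

open MeasureTheory Real intervalIntegral

namespace Real

lemma sin_le_sub_cube_div_two_mul_pi_sq {x : ℝ} (hx₀ : 0 ≤ x) (hx : x ≤ π) :
    sin x ≤ x - x ^ 3 / (2 * π ^ 2) := by
  have hsin₀ : 0 ≤ sin (x / 2) := sin_nonneg_of_nonneg_of_le_pi (by linarith) (by linarith)
  have hsin : sin (x / 2) ≤ x / 2 := sin_le (by linarith)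
  have hcos₀ : 0 ≤ cos (x / 2) := cos_nonneg_of_mem_Icc ⟨by linarith [pi_pos], by linarith⟩
  have hcos : cos (x / 2) ≤ 1 - 2 / π ^ 2 * (x / 2) ^ 2 :=
    cos_le_one_sub_mul_cos_sq (by rw [abs_of_nonneg (by linarith)]; linarith)
  calc sin x = 2 * sin (x / 2) * cos (x / 2) := by rw [← sin_two_mul]; ring_nf
    _ ≤ 2 * (x / 2) * (1 - 2 / π ^ 2 * (x / 2) ^ 2) := by gcongr
    _ = x - x ^ 3 / (2 * π ^ 2) := by field_simp

lemma cube_le_sq_add_two_mul_pi_mul_sub_sin {x : ℝ} (hx : 0 ≤ x) :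
    x ^ 3 ≤ (x + 2 * π) ^ 2 * (x - sin x) := by
  have hπ : 3 < π := pi_gt_three
  rcases le_total x π with hxπ | hπx
  · have hsub : x ^ 3 / (2 * π ^ 2) ≤ x - sin x := by
      linarith [sin_le_sub_cube_div_two_mul_pi_sq hx hxπ]
    calc x ^ 3 ≤ (2 * π) ^ 2 * (x ^ 3 / (2 * π ^ 2)) := by
          field_simp; nlinarith [pow_nonneg hx 3]
      _ ≤ (x + 2 * π) ^ 2 * (x - sin x) := by gcongr; linarith
  · have hsq : x ^ 2 + 12 * x ≤ (x + 2 * π) ^ 2 := by nlinarith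
    calc x ^ 3 ≤ (x ^ 2 + 12 * x) * (x - 1) := by nlinarith
      _ ≤ (x + 2 * π) ^ 2 * (x - sin x) := by
          gcongr
          · linarith
          · exact sin_le_one x

lemma one_le_sq_one_add_two_mul_pi_div_mul_one_sub_sin_div {x : ℝ} (hx : 0 < x) :
    1 ≤ (1 + 2 * π / x) ^ 2 * (1 - sin x / x) := by
  have h : (1 + 2 * π / x) ^ 2 * (1 - sin x / x) = (x + 2 * π) ^ 2 * (x - sin x) / x ^ 3 := by
    field_simp
  rw [h, le_div_iff₀ (by positivity), one_mul]
  exact cube_le_sq_add_two_mul_pi_mul_sub_sin hx.le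

lemma one_le_sq_one_add_two_mul_pi_div_mul_one_sub_sinc {a x : ℝ} (ha : 0 < a) (hax : a ≤ |x|) :
    1 ≤ (1 + 2 * π / a) ^ 2 * (1 - sinc x) := by
  have hx : 0 < |x| := ha.trans_le hax
  have hsinc : sinc x = sin |x| / |x| := by
    rcases abs_choice x with h | h <;> rw [h] at hx ⊢
    · exact sinc_of_ne_zero hx.ne'
    · rw [← sinc_neg, sinc_of_ne_zero hx.ne']
  calc (1 : ℝ) ≤ (1 + 2 * π / |x|) ^ 2 * (1 - sin |x| / |x|) :=
        one_le_sq_one_add_two_mul_pi_div_mul_one_sub_sin_div hx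
    _ ≤ (1 + 2 * π / a) ^ 2 * (1 - sinc x) := by
        rw [← hsinc]
        gcongr
        exact sub_nonneg.2 (sinc_le_one x)

lemma integral_cos_mul (a y : ℝ) : ∫ u in (0 : ℝ)..a, cos (u * y) = a * sinc (a * y) := by
  rcases eq_or_ne y 0 with rfl | hy
  · simp
  rcases eq_or_ne a 0 with rfl | ha
  · simp
  rw [integral_comp_mul_right (fun x => cos x) hy, integral_cos,
    sinc_of_ne_zero (mul_ne_zero ha hy)]
  simp only [zero_mul, sin_zero, sub_zero, smul_eq_mul]
  field_simp

end Real

lemma intervalIntegral_one_sub_integral_cos_mul {Ω : Type*} [MeasurableSpace Ω]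
    {μ : Measure Ω} [IsProbabilityMeasure μ] {Y : Ω → ℝ} (hY : Measurable Y) (a : ℝ) :
    ∫ u in (0 : ℝ)..a, (1 - ∫ ω, cos (u * Y ω) ∂μ) = a * ∫ ω, (1 - sinc (a * Y ω)) ∂μ := by
  have : IsFiniteMeasure (volume.restrict (Set.uIoc 0 a)) :=
    isFiniteMeasure_restrict.2 measure_Ioc_lt_top.ne
  have hint : Integrable (Function.uncurry fun u ω => 1 - cos (u * Y ω))
      ((volume.restrict (Set.uIoc 0 a)).prod μ) :=
    (integrable_const (2 : ℝ)).mono' (by fun_prop) (ae_of_all _ fun p => by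
      simp only [Function.uncurry, norm_eq_abs, abs_le]
      constructor <;> linarith [neg_one_le_cos (p.1 * Y p.2), cos_le_one (p.1 * Y p.2)])
  calc ∫ u in (0 : ℝ)..a, (1 - ∫ ω, cos (u * Y ω) ∂μ)
      = ∫ u in (0 : ℝ)..a, ∫ ω, (1 - cos (u * Y ω)) ∂μ := by
        congr 1 with u
        rw [integral_sub (integrable_const 1), MeasureTheory.integral_const, probReal_univ, one_smul]
        exact (integrable_const (1 : ℝ)).mono' (by fun_prop)
          (ae_of_all _ fun ω => abs_cos_le_one _)
    _ = ∫ ω, (∫ u in (0 : ℝ)..a, (1 - cos (u * Y ω))) ∂μ := intervalIntegral_integral_swap hint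
    _ = ∫ ω, a * (1 - sinc (a * Y ω)) ∂μ := by
        congr 1 with ω
        rw [intervalIntegral.integral_sub intervalIntegrable_const
          (Continuous.intervalIntegrable (by fun_prop) _ _), integral_cos_mul]
        simp [mul_sub]
    _ = a * ∫ ω, (1 - sinc (a * Y ω)) ∂μ := MeasureTheory.integral_const_mul _ _

theorem tail_char_fn_bound {Ω : Type*} [MeasureSpace Ω]
    (μ : Measure Ω) [IsProbabilityMeasure μ] (Y : Ω → ℝ) (hY : Measurable Y)
    (C Δ : ℝ) (hC : 0 < C) (hΔ : 0 < Δ) :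
    (μ {ω | C < |Y ω|}).toReal ≤
      (1 / Δ) * (1 + 2 * Real.pi / (C * Δ)) ^ 2 *
        ∫ u in (0:ℝ)..Δ, (1 - ∫ ω, Real.cos (u * Y ω) ∂μ) := by
  set K := (1 + 2 * π / (C * Δ)) ^ 2
  set f : Ω → ℝ := fun ω => K * (1 - sinc (Δ * Y ω))
  have hf_nonneg : 0 ≤ᵐ[μ] f :=
    ae_of_all _ fun ω => mul_nonneg (sq_nonneg _) (sub_nonneg.2 (sinc_le_one _))
  have hf_int : Integrable f μ :=
    ((integrable_const 1).sub ((integrable_const (1 : ℝ)).mono' (by fun_prop)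
      (ae_of_all _ fun ω => abs_sinc_le_one _))).const_mul K
  have htail : {ω | C < |Y ω|} ⊆ {ω | 1 ≤ f ω} := fun ω hω =>
    one_le_sq_one_add_two_mul_pi_div_mul_one_sub_sinc (mul_pos hC hΔ)
      (by rw [abs_mul, abs_of_pos hΔ, mul_comm Δ]; exact mul_le_mul_of_nonneg_right hω.le hΔ.le)
  calc (μ {ω | C < |Y ω|}).toReal ≤ μ.real {ω | 1 ≤ f ω} := measureReal_mono htail
    _ ≤ ∫ ω, f ω ∂μ := by simpa using mul_meas_ge_le_integral_of_nonneg hf_nonneg hf_int 1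
    _ = (1 / Δ) * K * ∫ u in (0:ℝ)..Δ, (1 - ∫ ω, cos (u * Y ω) ∂μ) := by
        rw [intervalIntegral_one_sub_integral_cos_mul hY, MeasureTheory.integral_const_mul]
        field_simp
end

section
/- Let α ∈ (0,2). Let G be a probability distribution function on ℝ satisfying G(x) = c/((−x)^α) for all x ≤ −x₀ and 1 − G(x) = c/x^α for all x ≥ x₀, where c > 0 and x₀ > 0. Then the real part of the characteristic function ĝ(ξ) = ∫ e^{iξx} dG(x) satisfies lim_{ξ→0⁺} (1 − ĝ(ξ))/ξ^α = 2c · ∫₀^∞ (sin x)/x^α dx, provided ĝ is real (i.e., G is symmetric). -/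
open MeasureTheory Real Set Filter intervalIntegral
open scoped Topology

/-!
Split `1 - ĝ(ξ) = ∫ (1 - cos (ξ x)) dμ` at `±x₀`. On `[-x₀, x₀]` the integrand is at most
`ξ² x₀² / 2`, which is `o(ξ^α)` because `α < 2`. By symmetry the two tails contribute equally, and
on `(x₀, ∞)` the measure has density `c α t^(-α-1)`, so the substitution `u = ξ t` turns one tail
into `c α ξ^α ∫_{ξ x₀}^∞ (1 - cos u) u^(-α-1) du`. As `ξ → 0⁺` this gives the limit
`2 c α ∫_0^∞ (1 - cos u) u^(-α-1) du`, and integrating `sin x / x^α` by parts against `1 - cos x`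
identifies `α ∫_0^∞ (1 - cos u) u^(-α-1) du` with the improper integral `∫_0^∞ sin x / x^α dx`.
-/

lemma one_sub_cos_nonneg (x : ℝ) : 0 ≤ 1 - cos x := by
  linarith [cos_le_one x]

lemma one_sub_cos_le_two (x : ℝ) : 1 - cos x ≤ 2 := by
  linarith [neg_one_le_cos x]

lemma one_sub_cos_le_sq_div_two (x : ℝ) : 1 - cos x ≤ x ^ 2 / 2 := by
  linarith [one_sub_sq_div_two_le_cos (x := x)]

lemma one_sub_cos_mul_rpow_le {p x : ℝ} (hx : 0 < x) :
    (1 - cos x) * x ^ p ≤ x ^ (p + 2) / 2 := by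
  rw [rpow_add hx, rpow_two]
  nlinarith [one_sub_cos_le_sq_div_two x, rpow_pos_of_pos hx p]

lemma intervalIntegrable_one_sub_cos_mul_rpow {p T : ℝ} (hp : -3 < p) (hT : 0 ≤ T) :
    IntervalIntegrable (fun u : ℝ => (1 - cos u) * u ^ p) volume 0 T := by
  refine (intervalIntegrable_rpow' (r := p + 2) (by linarith)).div_const 2 |>.mono_fun
    (by fun_prop) ?_
  filter_upwards [ae_restrict_mem measurableSet_uIoc] with u hu
  rw [uIoc_of_le hT] at hu
  have hu0 : 0 < u := hu.1
  rw [norm_of_nonneg (mul_nonneg (one_sub_cos_nonneg u) (rpow_nonneg hu0.le p)),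
    norm_of_nonneg (by positivity)]
  exact one_sub_cos_mul_rpow_le hu0

lemma integrableOn_one_sub_cos_mul_rpow_Ioi {p : ℝ} (hp3 : -3 < p) (hp1 : p < -1) :
    IntegrableOn (fun u : ℝ => (1 - cos u) * u ^ p) (Ioi 0) := by
  rw [← Ioc_union_Ioi_eq_Ioi zero_le_one]
  refine IntegrableOn.union ?_ ?_
  · exact (intervalIntegrable_iff_integrableOn_Ioc_of_le zero_le_one).1
      (intervalIntegrable_one_sub_cos_mul_rpow hp3 zero_le_one)
  · refine ((integrableOn_Ioi_rpow_of_lt hp1 one_pos).const_mul 2).mono' (by fun_prop) ?_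
    filter_upwards [ae_restrict_mem measurableSet_Ioi] with u hu
    have hu0 : (0 : ℝ) < u := one_pos.trans hu
    rw [norm_of_nonneg (mul_nonneg (one_sub_cos_nonneg u) (rpow_nonneg hu0.le p))]
    exact mul_le_mul_of_nonneg_right (one_sub_cos_le_two u) (rpow_nonneg hu0.le p)

lemma intervalIntegrable_sin_mul_rpow {p T : ℝ} (hp : -2 < p) (hT : 0 ≤ T) :
    IntervalIntegrable (fun x : ℝ => sin x * x ^ p) volume 0 T := by
  refine (intervalIntegrable_rpow' (r := p + 1) (by linarith)).mono_fun (by fun_prop) ?_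
  filter_upwards [ae_restrict_mem measurableSet_uIoc] with x hx
  rw [uIoc_of_le hT] at hx
  have hx0 : 0 < x := hx.1
  rw [norm_mul, norm_of_nonneg (rpow_nonneg hx0.le p), norm_of_nonneg (rpow_nonneg hx0.le _),
    rpow_add_one hx0.ne', mul_comm (x ^ p)]
  gcongr
  simpa [abs_of_pos hx0] using abs_sin_le_abs (x := x)

lemma continuousOn_one_sub_cos_mul_rpow {p : ℝ} (hp : -2 < p) :
    ContinuousOn (fun x : ℝ => (1 - cos x) * x ^ p) (Ici 0) := by
  intro x hx
  rcases (mem_Ici.1 hx).eq_or_lt with rfl | hx0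
  · have hbound : Tendsto (fun y : ℝ => y ^ (p + 2) / 2) (𝓝[Ici 0] 0) (𝓝 0) := by
      have h := (continuousAt_rpow_const 0 (p + 2) (Or.inr (by linarith))).tendsto.div_const 2
      rw [zero_rpow (by linarith), zero_div] at h
      exact h.mono_left nhdsWithin_le_nhds
    simp only [ContinuousWithinAt, cos_zero, sub_self, zero_mul]
    refine squeeze_zero' ?_ ?_ hbound
    · filter_upwards [self_mem_nhdsWithin] with y hy
      exact mul_nonneg (one_sub_cos_nonneg y) (rpow_nonneg hy p)
    · filter_upwards [self_mem_nhdsWithin] with y hy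
      rcases (mem_Ici.1 hy).eq_or_lt with rfl | hy0
      · simp [zero_rpow (show p + 2 ≠ 0 by linarith)]
      · exact one_sub_cos_mul_rpow_le hy0
  · exact (ContinuousAt.mul (by fun_prop)
      (continuousAt_rpow_const x p (Or.inl hx0.ne'))).continuousWithinAt

/-- Integration by parts with the primitive `1 - cos x = O(x²)` of `sin`, so that the boundary term
at `0` vanishes because `α < 2`. -/
lemma integral_sin_div_rpow_eq {α T : ℝ} (hα : α < 2) (hT : 0 ≤ T) :
    ∫ x in (0 : ℝ)..T, sin x / x ^ α
      = (1 - cos T) * T ^ (-α) + α * ∫ x in (0 : ℝ)..T, (1 - cos x) * x ^ (-α - 1) := by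
  have hderiv : ∀ x ∈ Ioo (0 : ℝ) T, HasDerivAt (fun y => (1 - cos y) * y ^ (-α))
      (sin x * x ^ (-α) - α * ((1 - cos x) * x ^ (-α - 1))) x := by
    intro x hx
    have h := ((hasDerivAt_cos x).const_sub 1).mul
      (hasDerivAt_rpow_const (p := -α) (Or.inl hx.1.ne'))
    exact h.congr_deriv (by ring)
  have hsin := intervalIntegrable_sin_mul_rpow (p := -α) (by linarith) hT
  have hcos := (intervalIntegrable_one_sub_cos_mul_rpow (p := -α - 1) (by linarith) hT).const_mul α
  have hftc := integral_eq_sub_of_hasDerivAt_of_le hT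
    ((continuousOn_one_sub_cos_mul_rpow (by linarith)).mono Icc_subset_Ici_self) hderiv
    (hsin.sub hcos)
  rw [integral_sub hsin hcos, intervalIntegral.integral_const_mul] at hftc
  have hdiv : ∫ x in (0 : ℝ)..T, sin x / x ^ α = ∫ x in (0 : ℝ)..T, sin x * x ^ (-α) :=
    integral_congr fun x hx => by
      rw [rpow_neg ((uIcc_of_le hT ▸ hx).1), div_eq_mul_inv]
  simp only [cos_zero, sub_self, zero_mul, sub_zero] at hftc
  linarith

theorem tendsto_integral_sin_div_rpow {α : ℝ} (hα0 : 0 < α) (hα2 : α < 2) :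
    Tendsto (fun T : ℝ => ∫ x in (0 : ℝ)..T, sin x / x ^ α) atTop
      (𝓝 (α * ∫ u in Ioi 0, (1 - cos u) * u ^ (-α - 1))) := by
  have hboundary : Tendsto (fun T : ℝ => (1 - cos T) * T ^ (-α)) atTop (𝓝 0) := by
    refine squeeze_zero' ?_ ?_ (by simpa using (tendsto_rpow_neg_atTop hα0).const_mul 2)
    · filter_upwards [eventually_ge_atTop 0] with T hT
      exact mul_nonneg (one_sub_cos_nonneg T) (rpow_nonneg hT _)
    · filter_upwards [eventually_ge_atTop 0] with T hT
      exact mul_le_mul_of_nonneg_right (one_sub_cos_le_two T) (rpow_nonneg hT _)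
  have hbulk := (intervalIntegral_tendsto_integral_Ioi 0
    (integrableOn_one_sub_cos_mul_rpow_Ioi (p := -α - 1) (by linarith) (by linarith))
    tendsto_id).const_mul α
  refine ((hboundary.add hbulk).congr' ?_).trans (by rw [zero_add])
  filter_upwards [eventually_ge_atTop 0] with T hT
  exact (integral_sin_div_rpow_eq hα2 hT).symm

theorem tendsto_setIntegral_Ioi_nhdsGT {E : Type*} [NormedAddCommGroup E] [NormedSpace ℝ E]
    {μ : Measure ℝ} {f : ℝ → E} {a : ℝ} (hf : IntegrableOn f (Ioi a) μ) :
    Tendsto (fun b => ∫ x in Ioi b, f x ∂μ) (𝓝[>] a) (𝓝 (∫ x in Ioi a, f x ∂μ)) := by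
  have hindicator : (fun b => ∫ x in Ioi a, (Ioi b).indicator f x ∂μ)
      =ᶠ[𝓝[>] a] fun b => ∫ x in Ioi b, f x ∂μ := by
    filter_upwards [self_mem_nhdsWithin] with b hb
    rw [MeasureTheory.integral_indicator measurableSet_Ioi,
      Measure.restrict_restrict measurableSet_Ioi,
      Ioi_inter_Ioi, max_eq_left (le_of_lt hb)]
  refine Tendsto.congr' hindicator
    (tendsto_integral_filter_of_dominated_convergence (fun x => ‖f x‖)
      (Eventually.of_forall fun b => hf.aestronglyMeasurable.indicator measurableSet_Ioi)
      (Eventually.of_forall fun b => ae_of_all _ fun x => norm_indicator_le_norm_self _ _)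
      hf.norm ?_)
  filter_upwards [ae_restrict_mem measurableSet_Ioi] with x hx
  refine tendsto_const_nhds.congr' ?_
  filter_upwards [nhdsWithin_le_nhds (Iio_mem_nhds hx)] with b hb
  exact (indicator_of_mem (show x ∈ Ioi b from hb) f).symm

theorem setIntegral_Iio_neg_eq_setIntegral_Ioi {E : Type*} [NormedAddCommGroup E]
    [NormedSpace ℝ E] {μ : Measure ℝ} (hμ : μ.map (fun x => -x) = μ) {f : ℝ → E}
    (hf : Function.Even f) (a : ℝ) :
    ∫ x in Iio (-a), f x ∂μ = ∫ x in Ioi a, f x ∂μ := by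
  conv_lhs => rw [← hμ, measurableEmbedding_neg.setIntegral_map]
  simp only [neg_preimage, neg_Iio, neg_neg, show ∀ x, f (-x) = f x from hf]

theorem integral_eq_setIntegral_Icc_add_two_mul_Ioi {μ : Measure ℝ}
    (hμ : μ.map (fun x => -x) = μ) {f : ℝ → ℝ} (hf : Function.Even f) (hfi : Integrable f μ)
    {a : ℝ} (ha : 0 ≤ a) :
    ∫ x, f x ∂μ = ∫ x in Icc (-a) a, f x ∂μ + 2 * ∫ x in Ioi a, f x ∂μ := by
  rw [← integral_Iic_add_Ioi hfi.integrableOn hfi.integrableOn,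
    ← Iio_union_Icc_eq_Iic (by linarith : -a ≤ a),
    setIntegral_union ((Iio_disjoint_Ici le_rfl).mono_right Icc_subset_Ici_self) measurableSet_Icc
      hfi.integrableOn hfi.integrableOn, setIntegral_Iio_neg_eq_setIntegral_Ioi hμ hf]
  ring

theorem one_sub_integral_cos_mul_eq {μ : Measure ℝ} [IsProbabilityMeasure μ]
    (hμ : μ.map (fun x => -x) = μ) (ξ : ℝ) {a : ℝ} (ha : 0 ≤ a) :
    1 - ∫ x, cos (ξ * x) ∂μ
      = ∫ x in Icc (-a) a, (1 - cos (ξ * x)) ∂μ + 2 * ∫ x in Ioi a, (1 - cos (ξ * x)) ∂μ := by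
  have hcos : Integrable (fun x => cos (ξ * x)) μ :=
    .of_bound (by fun_prop) 1 (Eventually.of_forall fun x => abs_cos_le_one _)
  have hint : Integrable (fun x => 1 - cos (ξ * x)) μ := (integrable_const 1).sub hcos
  rw [← integral_eq_setIntegral_Icc_add_two_mul_Ioi hμ (fun x => by simp [mul_neg]) hint ha,
    integral_sub (integrable_const 1) hcos]
  simp

theorem setIntegral_Icc_one_sub_cos_mul_le {μ : Measure ℝ} [IsProbabilityMeasure μ] (ξ a : ℝ) :
    ∫ x in Icc (-a) a, (1 - cos (ξ * x)) ∂μ ≤ ξ ^ 2 * a ^ 2 / 2 := by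
  calc ∫ x in Icc (-a) a, (1 - cos (ξ * x)) ∂μ
      ≤ ∫ _ in Icc (-a) a, ξ ^ 2 * a ^ 2 / 2 ∂μ := by
        refine setIntegral_mono_on ?_ (integrableOn_const (measure_ne_top _ _)) measurableSet_Icc
          fun x hx => (one_sub_cos_le_sq_div_two _).trans ?_
        · exact Integrable.integrableOn
            (.of_bound (by fun_prop) 2 (Eventually.of_forall fun x => by
              rw [norm_of_nonneg (one_sub_cos_nonneg _)]; linarith [neg_one_le_cos (ξ * x)]))
        · have : x ^ 2 ≤ a ^ 2 := sq_le_sq' hx.1 hx.2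
          nlinarith [sq_nonneg ξ]
    _ = μ.real (Icc (-a) a) * (ξ ^ 2 * a ^ 2 / 2) := by rw [setIntegral_const, smul_eq_mul]
    _ ≤ ξ ^ 2 * a ^ 2 / 2 := mul_le_of_le_one_left (by positivity) measureReal_le_one

theorem tendsto_setIntegral_Icc_one_sub_cos_mul_div_rpow {μ : Measure ℝ} [IsProbabilityMeasure μ]
    {α : ℝ} (hα : α < 2) (a : ℝ) :
    Tendsto (fun ξ : ℝ => (∫ x in Icc (-a) a, (1 - cos (ξ * x)) ∂μ) / ξ ^ α) (𝓝[>] 0) (𝓝 0) := by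
  have hbound : Tendsto (fun ξ : ℝ => ξ ^ (2 - α) * (a ^ 2 / 2)) (𝓝[>] 0) (𝓝 0) := by
    have h := ((continuousAt_rpow_const 0 (2 - α) (Or.inr (by linarith))).tendsto.mul_const
      (a ^ 2 / 2))
    rw [zero_rpow (by linarith), zero_mul] at h
    exact h.mono_left nhdsWithin_le_nhds
  refine squeeze_zero' ?_ ?_ hbound
  · filter_upwards [self_mem_nhdsWithin] with ξ hξ
    exact div_nonneg (setIntegral_nonneg measurableSet_Icc fun x _ => one_sub_cos_nonneg _)
      (rpow_nonneg (le_of_lt hξ) _)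
  · filter_upwards [self_mem_nhdsWithin] with ξ (hξ : 0 < ξ)
    rw [div_le_iff₀ (rpow_pos_of_pos hξ α), mul_right_comm, ← rpow_add hξ, sub_add_cancel,
      rpow_two]
    linarith [setIntegral_Icc_one_sub_cos_mul_le (μ := μ) ξ a]

lemma integral_Ioc_pareto_density {α c a b : ℝ} (hα : α ≠ 0) (ha : 0 < a) (hab : a ≤ b) :
    ∫ t in Ioc a b, c * α * t ^ (-α - 1) = c / a ^ α - c / b ^ α := by
  have hzero : (0 : ℝ) ∉ uIcc a b := by rw [uIcc_of_le hab]; exact fun h => ha.not_ge h.1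
  rw [← integral_of_le hab, intervalIntegral.integral_const_mul,
    integral_rpow (Or.inr ⟨by contrapose! hα; linarith, hzero⟩), sub_add_cancel,
    rpow_neg (ha.trans_le hab).le, rpow_neg ha.le]
  field_simp
  ring

theorem restrict_Ioi_eq_withDensity_of_tail {μ : Measure ℝ} [IsFiniteMeasure μ] {α c x₀ : ℝ}
    (hα : 0 < α) (hc : 0 ≤ c) (hx₀ : 0 < x₀)
    (htail : ∀ x, x₀ ≤ x → 1 - (μ (Iic x)).toReal = c / x ^ α) :
    μ.restrict (Ioi x₀)
      = (volume.restrict (Ioi x₀)).withDensity fun t => ENNReal.ofReal (c * α * t ^ (-α - 1)) := by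
  refine Measure.ext_of_Iic _ _ fun x => ?_
  rw [Measure.restrict_apply measurableSet_Iic, withDensity_apply _ measurableSet_Iic,
    Measure.restrict_restrict measurableSet_Iic, inter_comm, Ioi_inter_Iic]
  rcases le_or_gt x x₀ with hx | hx
  · simp [Ioc_eq_empty (not_lt.2 hx)]
  have hdensity : IntegrableOn (fun t : ℝ => c * α * t ^ (-α - 1)) (Ioc x₀ x) :=
    IntegrableOn.mono_set
      ((integrableOn_Ioi_rpow_of_lt (by linarith : -α - 1 < -1) hx₀).const_mul (c * α))
      Ioc_subset_Ioi_self
  have hnonneg : 0 ≤ᵐ[volume.restrict (Ioc x₀ x)] fun t : ℝ => c * α * t ^ (-α - 1) := by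
    filter_upwards [ae_restrict_mem measurableSet_Ioc] with t ht
    have := rpow_nonneg (hx₀.trans ht.1).le (-α - 1)
    positivity
  have hmass : μ.real (Ioc x₀ x) = c / x₀ ^ α - c / x ^ α := by
    rw [← Iic_sdiff_Iic, measureReal_sdiff (Iic_subset_Iic.2 hx.le) measurableSet_Iic]
    linarith [htail x hx.le, htail x₀ le_rfl, measureReal_def μ (Iic x),
      measureReal_def μ (Iic x₀)]
  rw [← ofReal_integral_eq_lintegral_ofReal hdensity hnonneg,
    integral_Ioc_pareto_density hα.ne' hx₀ hx.le, ← hmass, ofReal_measureReal]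

theorem setIntegral_Ioi_comp_mul_of_tail {μ : Measure ℝ} [IsFiniteMeasure μ] {α c x₀ : ℝ}
    (hα : 0 < α) (hc : 0 ≤ c) (hx₀ : 0 < x₀)
    (htail : ∀ x, x₀ ≤ x → 1 - (μ (Iic x)).toReal = c / x ^ α) (g : ℝ → ℝ) {ξ : ℝ}
    (hξ : 0 < ξ) :
    ∫ x in Ioi x₀, g (ξ * x) ∂μ = c * α * ξ ^ α * ∫ u in Ioi (ξ * x₀), g u * u ^ (-α - 1) := by
  have hscale : ∀ t ∈ Ioi x₀, (ENNReal.ofReal (c * α * t ^ (-α - 1))).toReal • g (ξ * t)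
      = c * α * ξ ^ (α + 1) * (g (ξ * t) * (ξ * t) ^ (-α - 1)) := by
    intro t ht
    have ht0 : 0 < t := hx₀.trans ht
    rw [ENNReal.toReal_ofReal (by have := rpow_nonneg ht0.le (-α - 1); positivity), smul_eq_mul,
      mul_rpow hξ.le ht0.le]
    have hξξ : ξ ^ (α + 1) * ξ ^ (-α - 1) = 1 := by rw [← rpow_add hξ]; norm_num
    linear_combination -c * α * g (ξ * t) * t ^ (-α - 1) * hξξ
  rw [restrict_Ioi_eq_withDensity_of_tail hα hc hx₀ htail,
    integral_withDensity_eq_integral_toReal_smul (by fun_prop)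
      (Eventually.of_forall fun _ => ENNReal.ofReal_lt_top),
    setIntegral_congr_fun measurableSet_Ioi hscale, MeasureTheory.integral_const_mul,
    integral_comp_mul_left_Ioi (fun u => g u * u ^ (-α - 1)) x₀ hξ, smul_eq_mul,
    rpow_add_one hξ.ne']
  field_simp

theorem pareto_tails_domain_of_attraction_general (α : ℝ) (hα0 : 0 < α) (hα2 : α < 2)
    (c x₀ : ℝ) (hc : 0 < c) (hx₀ : 0 < x₀)
    (μ : Measure ℝ) [IsProbabilityMeasure μ]
    (hsymm : μ.map (fun x => -x) = μ)
    (hup : ∀ x : ℝ, x₀ ≤ x → 1 - (μ (Iic x)).toReal = c / x ^ α) :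
    ∃ I : ℝ,
      Tendsto (fun T : ℝ => ∫ x in (0:ℝ)..T, Real.sin x / x ^ α) atTop (nhds I) ∧
      Tendsto (fun ξ : ℝ => (1 - ∫ x, Real.cos (ξ * x) ∂μ) / ξ ^ α)
        (nhdsWithin 0 (Ioi 0)) (nhds (2 * c * I)) := by
  have hK := integrableOn_one_sub_cos_mul_rpow_Ioi (p := -α - 1) (by linarith) (by linarith)
  refine ⟨α * ∫ u in Ioi 0, (1 - cos u) * u ^ (-α - 1), tendsto_integral_sin_div_rpow hα0 hα2, ?_⟩
  have hsplit : ∀ ξ : ℝ, 0 < ξ → (1 - ∫ x, cos (ξ * x) ∂μ) / ξ ^ α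
      = (∫ x in Icc (-x₀) x₀, (1 - cos (ξ * x)) ∂μ) / ξ ^ α
        + 2 * c * (α * ∫ u in Ioi (ξ * x₀), (1 - cos u) * u ^ (-α - 1)) := by
    intro ξ hξ
    rw [one_sub_integral_cos_mul_eq hsymm ξ hx₀.le,
      setIntegral_Ioi_comp_mul_of_tail hα0 hc.le hx₀ hup (fun u => 1 - cos u) hξ]
    field_simp [(rpow_pos_of_pos hξ α).ne']
  have hscale : Tendsto (fun ξ : ℝ => ξ * x₀) (𝓝[>] 0) (𝓝[>] 0) := by
    have h := ContinuousWithinAt.tendsto_nhdsWithin (x := 0)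
      (continuous_mul_const x₀).continuousWithinAt fun ξ (hξ : 0 < ξ) => mul_pos hξ hx₀
    rwa [zero_mul] at h
  have hlimit := (tendsto_setIntegral_Icc_one_sub_cos_mul_div_rpow (μ := μ) hα2 x₀).add
    ((((tendsto_setIntegral_Ioi_nhdsGT hK).comp hscale).const_mul α).const_mul (2 * c))
  rw [zero_add] at hlimit
  refine hlimit.congr' ?_
  filter_upwards [self_mem_nhdsWithin] with ξ hξ
  exact (hsplit ξ hξ).symm

theorem pareto_tails_domain_of_attraction (α : ℝ) (hα0 : 0 < α) (hα2 : α < 2)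
    (c x₀ : ℝ) (hc : 0 < c) (hx₀ : 0 < x₀)
    (μ : Measure ℝ) [IsProbabilityMeasure μ]
    (hsymm : μ.map (fun x => -x) = μ)
    (hlow : ∀ x : ℝ, x ≤ -x₀ → (μ (Iic x)).toReal = c / (-x) ^ α)
    (hup : ∀ x : ℝ, x₀ ≤ x → 1 - (μ (Iic x)).toReal = c / x ^ α) :
    ∃ I : ℝ,
      Tendsto (fun T : ℝ => ∫ x in (0:ℝ)..T, Real.sin x / x ^ α) atTop (nhds I) ∧
      Tendsto (fun ξ : ℝ => (1 - ∫ x, Real.cos (ξ * x) ∂μ) / ξ ^ α)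
        (nhdsWithin 0 (Ioi 0)) (nhds (2 * c * I)) :=
  pareto_tails_domain_of_attraction_general α hα0 hα2 c x₀ hc hx₀ μ hsymm hup
end

section
/- Suppose F₀* is a symmetric probability distribution function with M := sup_{x>0} x^α (1 − F₀*(x)) < ∞, where α ∈ (0,2). Then for every ε > 0 there is a constant C_ε > 0, depending only on M, α, ε, such that for every n ≥ 1 and every nonnegative weights β₁,…,β_n with each β_j ≤ 1 and ∑_j β_j^α = 1, and X₁,…,X_n i.i.d. with distribution function F₀*, one has P(|∑_{j=1}^n β_j X_j| > C_ε) ≤ ε. -/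
/-!
Truncate every summand `β j * X j` at a level `t`. By the tail bound and `∑ β j ^ α = 1`, some
summand exceeds `t` in absolute value with probability at most `2 M / t ^ α`. The truncated
summands are independent, centred by symmetry, and by the layer-cake formula have second moments
at most `4 M β j ^ α t ^ (2 - α) / (2 - α)`, so Chebyshev's inequality bounds their sum by `C`
outside an event of probability `4 M t ^ (2 - α) / ((2 - α) C ^ 2)`. Choosing first `t` and then
`C` large makes both probabilities at most `ε / 2`.
-/

open MeasureTheory ProbabilityTheory Set Filter

/-- Unlike `ProbabilityTheory.truncation`, which keeps `Ioc (-A) A`, this truncation is odd, so it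
keeps symmetric random variables centred. -/
noncomputable def truncate (t z : ℝ) : ℝ := if |z| ≤ t then z else 0

lemma measurable_truncate (t : ℝ) : Measurable (truncate t) :=
  Measurable.ite (measurableSet_le measurable_abs measurable_const) measurable_id measurable_const

lemma abs_truncate_le {t : ℝ} (ht : 0 ≤ t) (z : ℝ) : |truncate t z| ≤ t := by
  unfold truncate; split_ifs with h <;> simp [h, ht]

lemma abs_truncate_le_abs (t z : ℝ) : |truncate t z| ≤ |z| := by
  unfold truncate; split_ifs <;> simp

lemma truncate_of_abs_le {t z : ℝ} (h : |z| ≤ t) : truncate t z = z := if_pos h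

lemma truncate_neg (t z : ℝ) : truncate t (-z) = -truncate t z := by
  unfold truncate; rw [abs_neg]; split_ifs <;> simp

lemma exists_pos_div_rpow_le (a : ℝ) {p δ : ℝ} (hp : 0 < p) (hδ : 0 < δ) :
    ∃ x > 0, a / x ^ p ≤ δ := by
  have h : Tendsto (fun x : ℝ => a / x ^ p) atTop (nhds 0) :=
    tendsto_const_nhds.div_atTop (tendsto_rpow_atTop hp)
  exact ((eventually_gt_atTop 0).and (h.eventually (ge_mem_nhds hδ))).exists

lemma integral_eq_zero_of_odd {ν : Measure ℝ} [ν.IsNegInvariant] {g : ℝ → ℝ}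
    (hg : ∀ x, g (-x) = -g x) : ∫ x, g x ∂ν = 0 := by
  have h := integral_neg_eq_self g ν
  simp only [hg, integral_neg] at h
  linarith

lemma measure_lt_abs_le_two_mul_measure_Ioi (ν : Measure ℝ) [ν.IsNegInvariant] (u : ℝ) :
    ν {x | u < |x|} ≤ 2 * ν (Ioi u) := by
  have hsub : {x : ℝ | u < |x|} ⊆ -Ioi u ∪ Ioi u := fun x (hx : u < |x|) => by
    rcases lt_abs.mp hx with h | h
    · exact Or.inr h
    · exact Or.inl (by simpa [lt_neg] using h)
  calc ν {x | u < |x|} ≤ ν (-Ioi u) + ν (Ioi u) :=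
        (measure_mono hsub).trans (measure_union_le _ _)
    _ = 2 * ν (Ioi u) := by rw [Measure.measure_neg, two_mul]

lemma measure_Ioi_le_of_tail {ν : Measure ℝ} [IsFiniteMeasure ν] {α M : ℝ}
    (htail : ∀ x : ℝ, 0 < x → x ^ α * (ν (Ioi x)).toReal ≤ M) {u : ℝ} (hu : 0 < u) :
    ν (Ioi u) ≤ ENNReal.ofReal (M / u ^ α) := by
  rw [← ENNReal.ofReal_toReal (measure_ne_top ν _)]
  exact ENNReal.ofReal_le_ofReal ((le_div_iff₀' (by positivity)).2 (htail u hu))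

lemma lintegral_Ioc_ofReal_mul_rpow {α : ℝ} (hα : α < 2) {c t : ℝ} (hc : 0 ≤ c) (ht : 0 ≤ t) :
    ∫⁻ s in Ioc 0 t, ENNReal.ofReal (c * s ^ (1 - α))
      = ENNReal.ofReal (c * t ^ (2 - α) / (2 - α)) := by
  have hint : IntervalIntegrable (fun s : ℝ => c * s ^ (1 - α)) volume 0 t :=
    (intervalIntegral.intervalIntegrable_rpow' (by linarith)).const_mul c
  rw [intervalIntegrable_iff_integrableOn_Ioc_of_le ht] at hint
  rw [← ofReal_integral_eq_lintegral_ofReal hint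
      (ae_restrict_of_forall_mem measurableSet_Ioc fun s hs => by
        have := Real.rpow_nonneg hs.1.le (1 - α); positivity),
    ← intervalIntegral.integral_of_le ht, intervalIntegral.integral_const_mul,
    integral_rpow (Or.inl (by linarith)), Real.zero_rpow (by linarith)]
  congr 1
  rw [show 1 - α + 1 = 2 - α by ring]
  ring

lemma measure_lt_abs_truncate_mul_rpow_le {Ω : Type*} [MeasurableSpace Ω] {μ : Measure Ω}
    {Z : Ω → ℝ} {α c t s : ℝ} (ht : 0 ≤ t) (hs : 0 < s)
    (htail : μ {ω | s < |Z ω|} ≤ ENNReal.ofReal (c / s ^ α)) :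
    μ {ω | s < |truncate t (Z ω)|} * ENNReal.ofReal (s ^ ((2 : ℝ) - 1))
      ≤ (Ioc 0 t).indicator (fun s => ENNReal.ofReal (c * s ^ (1 - α))) s := by
  by_cases hst : s ≤ t
  · rw [indicator_of_mem (show s ∈ Ioc 0 t from ⟨hs, hst⟩),
      show c * s ^ (1 - α) = c / s ^ α * s ^ ((2 : ℝ) - 1) by
        rw [show (2 : ℝ) - 1 = 1 by norm_num, Real.rpow_sub hs, Real.rpow_one]; ring,
      ENNReal.ofReal_mul' (Real.rpow_nonneg hs.le _)]
    gcongr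
    exact (measure_mono fun ω (h : s < |truncate t (Z ω)|) =>
      h.trans_le (abs_truncate_le_abs t _)).trans htail
  · have hempty : {ω | s < |truncate t (Z ω)|} = ∅ :=
      eq_empty_of_forall_notMem fun ω (h : s < |truncate t (Z ω)|) =>
        hst (h.trans_le (abs_truncate_le ht _)).le
    simp [hempty]

lemma integral_truncate_sq_le {Ω : Type*} [MeasurableSpace Ω] {μ : Measure Ω} {Z : Ω → ℝ}
    (hZ : AEMeasurable Z μ) {α c t : ℝ} (hα : α < 2) (hc : 0 ≤ c) (ht : 0 < t)
    (htail : ∀ u : ℝ, 0 < u → μ {ω | u < |Z ω|} ≤ ENNReal.ofReal (c / u ^ α)) :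
    ∫ ω, truncate t (Z ω) ^ 2 ∂μ ≤ 2 * c * t ^ (2 - α) / (2 - α) := by
  set Y : Ω → ℝ := fun ω => |truncate t (Z ω)|
  have hY : AEMeasurable Y μ := ((measurable_truncate t).comp_aemeasurable hZ).abs
  have hYsq : (fun ω => truncate t (Z ω) ^ 2) = fun ω => Y ω ^ (2 : ℝ) := by
    ext ω; simp [Y, sq_abs]
  have hbound : ∫⁻ ω, ENNReal.ofReal (Y ω ^ (2 : ℝ)) ∂μ
      ≤ ENNReal.ofReal (2 * c * t ^ (2 - α) / (2 - α)) := by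
    rw [lintegral_rpow_eq_lintegral_meas_lt_mul μ (ae_of_all _ fun ω => abs_nonneg _) hY two_pos]
    calc ENNReal.ofReal 2 * ∫⁻ s in Ioi 0, μ {ω | s < Y ω} * ENNReal.ofReal (s ^ ((2 : ℝ) - 1))
        ≤ ENNReal.ofReal 2 *
            ∫⁻ s, (Ioc 0 t).indicator (fun s => ENNReal.ofReal (c * s ^ (1 - α))) s := by
          gcongr ENNReal.ofReal 2 * ?_
          exact (setLIntegral_mono' measurableSet_Ioi fun s (hs : 0 < s) =>
            measure_lt_abs_truncate_mul_rpow_le ht.le hs (htail s hs)).trans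
              (setLIntegral_le_lintegral _ _)
      _ = ENNReal.ofReal (2 * c * t ^ (2 - α) / (2 - α)) := by
          rw [lintegral_indicator measurableSet_Ioc, lintegral_Ioc_ofReal_mul_rpow hα hc ht.le,
            ← ENNReal.ofReal_mul zero_le_two]
          congr 1
          ring
  rw [hYsq, integral_eq_lintegral_of_nonneg_ae (ae_of_all _ fun ω => by positivity)
    (hY.pow_const _).aestronglyMeasurable]
  have hα' : 0 < 2 - α := by linarith
  exact ENNReal.toReal_le_of_le_ofReal (by positivity) hbound

lemma setOf_lt_abs_sum_subset {Ω ι : Type*} [Fintype ι] (Z : ι → Ω → ℝ) (t C : ℝ) :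
    {ω | C < |∑ i, Z i ω|} ⊆ (⋃ i, {ω | t < |Z i ω|}) ∪ {ω | C ≤ |∑ i, truncate t (Z i ω)|} := by
  intro ω (hω : C < |∑ i, Z i ω|)
  by_cases h : ∃ i, t < |Z i ω|
  · exact Or.inl (mem_iUnion.2 h)
  · push Not at h
    refine Or.inr (show C ≤ |∑ i, truncate t (Z i ω)| from ?_)
    simp_rw [truncate_of_abs_le (h _)]
    exact hω.le

lemma measure_le_abs_sum_le_of_iIndepFun {Ω ι : Type*} [MeasurableSpace Ω] {μ : Measure Ω}
    [IsProbabilityMeasure μ] [Fintype ι] {Y : ι → Ω → ℝ} (hind : iIndepFun Y μ)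
    (hY : ∀ i, MemLp (Y i) 2 μ) (hmean : ∀ i, μ[Y i] = 0) {C : ℝ} (hC : 0 < C) :
    μ {ω | C ≤ |∑ i, Y i ω|} ≤ ENNReal.ofReal ((∑ i, μ[Y i ^ 2]) / C ^ 2) := by
  have hT : MemLp (∑ i, Y i) 2 μ := memLp_finsetSum' _ fun i _ => hY i
  have hmeanT : ∫ ω, ∑ i, Y i ω ∂μ = 0 := by
    rw [integral_finsetSum _ fun i _ => (hY i).integrable one_le_two]
    simp [hmean]
  have hvar : variance (∑ i, Y i) μ ≤ ∑ i, μ[Y i ^ 2] := by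
    rw [IndepFun.variance_sum (fun i _ => hY i) fun i _ j _ hij => hind.indepFun hij]
    exact Finset.sum_le_sum fun i _ => variance_le_expectation_sq (hY i).1
  have hcheb := meas_ge_le_variance_div_sq hT hC
  simp only [Finset.sum_apply, hmeanT, sub_zero] at hcheb
  exact hcheb.trans (ENNReal.ofReal_le_ofReal (by gcongr))

section WeightedSummands

variable {Ω : Type*} [MeasurableSpace Ω] {μ : Measure Ω} {ν : Measure ℝ} {α M t : ℝ}

lemma measure_lt_abs_mul_le [IsFiniteMeasure ν] [ν.IsNegInvariant] {X : Ω → ℝ} (hX : Measurable X)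
    (hXν : μ.map X = ν) (htail : ∀ x : ℝ, 0 < x → x ^ α * (ν (Ioi x)).toReal ≤ M)
    {b u : ℝ} (hb : 0 ≤ b) (hu : 0 < u) :
    μ {ω | u < |b * X ω|} ≤ ENNReal.ofReal (2 * M * b ^ α / u ^ α) := by
  rcases hb.eq_or_lt with rfl | hb
  · simp [not_lt.2 hu.le]
  have hpre : {ω | u < |b * X ω|} = X ⁻¹' {x | u / b < |x|} := by
    ext ω
    simp only [mem_ofPred_eq, mem_preimage, abs_mul, abs_of_pos hb, div_lt_iff₀' hb]
  rw [hpre, ← Measure.map_apply hX (measurableSet_lt measurable_const measurable_abs), hXν]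
  calc ν {x | u / b < |x|} ≤ 2 * ν (Ioi (u / b)) := measure_lt_abs_le_two_mul_measure_Ioi ν _
    _ ≤ 2 * ENNReal.ofReal (M / (u / b) ^ α) := by
        gcongr; exact measure_Ioi_le_of_tail htail (div_pos hu hb)
    _ = ENNReal.ofReal (2 * M * b ^ α / u ^ α) := by
        rw [← ENNReal.ofReal_ofNat 2, ← ENNReal.ofReal_mul zero_le_two,
          Real.div_rpow hu.le hb.le, div_div_eq_mul_div]
        congr 1
        ring

lemma integral_truncate_mul_eq_zero [ν.IsNegInvariant] {X : Ω → ℝ} (hX : Measurable X)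
    (hXν : μ.map X = ν) (t b : ℝ) : ∫ ω, truncate t (b * X ω) ∂μ = 0 := by
  have hg : Measurable fun x => truncate t (b * x) :=
    (measurable_truncate t).comp (measurable_const_mul b)
  rw [← integral_map hX.aemeasurable hg.aestronglyMeasurable, hXν]
  exact integral_eq_zero_of_odd fun x => by rw [mul_neg, truncate_neg]

lemma integral_truncate_mul_sq_le [IsFiniteMeasure ν] [ν.IsNegInvariant] {X : Ω → ℝ}
    (hX : Measurable X) (hXν : μ.map X = ν) (hα : α < 2) (hM : 0 ≤ M)
    (htail : ∀ x : ℝ, 0 < x → x ^ α * (ν (Ioi x)).toReal ≤ M) {b : ℝ} (hb : 0 ≤ b) (ht : 0 < t) :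
    ∫ ω, truncate t (b * X ω) ^ 2 ∂μ ≤ 2 * (2 * M * b ^ α) * t ^ (2 - α) / (2 - α) :=
  integral_truncate_sq_le (hX.const_mul b).aemeasurable hα (by positivity) ht fun _ hu =>
    measure_lt_abs_mul_le hX hXν htail hb hu

variable {ι : Type*} [Fintype ι] {X : ι → Ω → ℝ} {β : ι → ℝ}

lemma measure_iUnion_lt_abs_mul_le [IsFiniteMeasure ν] [ν.IsNegInvariant]
    (hX : ∀ i, Measurable (X i)) (hXν : ∀ i, μ.map (X i) = ν) (hM : 0 ≤ M)
    (htail : ∀ x : ℝ, 0 < x → x ^ α * (ν (Ioi x)).toReal ≤ M) (hβ : ∀ i, 0 ≤ β i)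
    (hβsum : ∑ i, β i ^ α = 1) (ht : 0 < t) :
    μ (⋃ i, {ω | t < |β i * X i ω|}) ≤ ENNReal.ofReal (2 * M / t ^ α) :=
  calc μ (⋃ i, {ω | t < |β i * X i ω|})
      ≤ ∑ i, μ {ω | t < |β i * X i ω|} := measure_iUnion_fintype_le _ _
    _ ≤ ∑ i, ENNReal.ofReal (2 * M * β i ^ α / t ^ α) :=
        Finset.sum_le_sum fun i _ => measure_lt_abs_mul_le (hX i) (hXν i) htail (hβ i) ht
    _ = ENNReal.ofReal (2 * M / t ^ α) := by
        rw [← ENNReal.ofReal_sum_of_nonneg fun i _ => by have := hβ i; positivity,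
          ← Finset.sum_div, ← Finset.mul_sum, hβsum, mul_one]

lemma measure_le_abs_sum_truncate_le [IsProbabilityMeasure μ] [IsFiniteMeasure ν]
    [ν.IsNegInvariant] (hX : ∀ i, Measurable (X i)) (hXν : ∀ i, μ.map (X i) = ν)
    (hind : iIndepFun X μ) (hα : α < 2) (hM : 0 ≤ M)
    (htail : ∀ x : ℝ, 0 < x → x ^ α * (ν (Ioi x)).toReal ≤ M) (hβ : ∀ i, 0 ≤ β i)
    (hβsum : ∑ i, β i ^ α = 1) (ht : 0 < t) {C : ℝ} (hC : 0 < C) :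
    μ {ω | C ≤ |∑ i, truncate t (β i * X i ω)|}
      ≤ ENNReal.ofReal (4 * M * t ^ (2 - α) / (2 - α) / C ^ 2) := by
  have hmeas : ∀ i, Measurable fun x => truncate t (β i * x) :=
    fun i => (measurable_truncate t).comp (measurable_const_mul (β i))
  refine (measure_le_abs_sum_le_of_iIndepFun (hind.comp _ hmeas)
    (fun i => MemLp.of_bound ((hmeas i).comp (hX i)).aestronglyMeasurable t
      (ae_of_all _ fun ω => abs_truncate_le ht.le _))
    (fun i => integral_truncate_mul_eq_zero (hX i) (hXν i) t (β i)) hC).trans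
    (ENNReal.ofReal_le_ofReal ?_)
  gcongr
  calc ∑ i, ∫ ω, truncate t (β i * X i ω) ^ 2 ∂μ
      ≤ ∑ i, 2 * (2 * M * β i ^ α) * t ^ (2 - α) / (2 - α) :=
        Finset.sum_le_sum fun i _ =>
          integral_truncate_mul_sq_le (hX i) (hXν i) hα hM htail (hβ i) ht
    _ = 4 * M * t ^ (2 - α) / (2 - α) := by
        rw [← Finset.sum_div, ← Finset.sum_mul, ← Finset.mul_sum, ← Finset.mul_sum, hβsum]
        ring

end WeightedSummands

theorem uniform_tightness_weighted_sums_general (α M ε : ℝ)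
    (hα0 : 0 < α) (hα2 : α < 2) (hε : 0 < ε) :
    ∃ C : ℝ, 0 < C ∧
      ∀ (Ω : Type) (_ : MeasurableSpace Ω) (μ : Measure Ω),
        IsProbabilityMeasure μ →
      ∀ ν : Measure ℝ, IsProbabilityMeasure ν →
        ν.map (fun x => -x) = ν →
        (∀ x : ℝ, 0 < x → x ^ α * (ν (Ioi x)).toReal ≤ M) →
      ∀ n : ℕ, 1 ≤ n →
      ∀ (X : Fin n → Ω → ℝ) (β : Fin n → ℝ),
        (∀ j, 0 ≤ β j ∧ β j ≤ 1) → (∑ j, β j ^ α) = 1 →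
        iIndepFun X μ →
        (∀ j, Measurable (X j) ∧ μ.map (X j) = ν) →
        (μ {ω | C < |∑ j, β j * X j ω|}).toReal ≤ ε := by
  obtain ⟨t, ht, hbad⟩ := exists_pos_div_rpow_le (2 * M) hα0 (half_pos hε)
  obtain ⟨C, hC, hgood⟩ :=
    exists_pos_div_rpow_le (4 * M * t ^ (2 - α) / (2 - α)) two_pos (half_pos hε)
  rw [Real.rpow_two] at hgood
  refine ⟨C, hC, fun Ω _ μ _ ν _ hsym htail n _ X β hβ hβsum hind hX => ?_⟩
  have : ν.IsNegInvariant := ⟨hsym⟩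
  have hM : 0 ≤ M := ENNReal.toReal_nonneg.trans (by simpa using htail 1 one_pos)
  have hα' : 0 < 2 - α := by linarith
  refine ENNReal.toReal_le_of_le_ofReal hε.le ?_
  calc μ {ω | C < |∑ j, β j * X j ω|}
      ≤ μ (⋃ j, {ω | t < |β j * X j ω|}) + μ {ω | C ≤ |∑ j, truncate t (β j * X j ω)|} :=
        (measure_mono (setOf_lt_abs_sum_subset _ t C)).trans (measure_union_le _ _)
    _ ≤ ENNReal.ofReal (2 * M / t ^ α) + ENNReal.ofReal (4 * M * t ^ (2 - α) / (2 - α) / C ^ 2) :=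
        add_le_add
          (measure_iUnion_lt_abs_mul_le (fun j => (hX j).1) (fun j => (hX j).2) hM htail
            (fun j => (hβ j).1) hβsum ht)
          (measure_le_abs_sum_truncate_le (fun j => (hX j).1) (fun j => (hX j).2) hind hα2 hM
            htail (fun j => (hβ j).1) hβsum ht hC)
    _ ≤ ENNReal.ofReal ε := by
        rw [← ENNReal.ofReal_add (by positivity) (by positivity)]
        exact ENNReal.ofReal_le_ofReal (by linarith)

theorem uniform_tightness_weighted_sums (α M ε : ℝ)
    (hα0 : 0 < α) (hα2 : α < 2) (hM : 0 ≤ M) (hε : 0 < ε) :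
    ∃ C : ℝ, 0 < C ∧
      ∀ (Ω : Type) (_ : MeasurableSpace Ω) (μ : Measure Ω),
        IsProbabilityMeasure μ →
      ∀ ν : Measure ℝ, IsProbabilityMeasure ν →
        ν.map (fun x => -x) = ν →
        (∀ x : ℝ, 0 < x → x ^ α * (ν (Ioi x)).toReal ≤ M) →
      ∀ n : ℕ, 1 ≤ n →
      ∀ (X : Fin n → Ω → ℝ) (β : Fin n → ℝ),
        (∀ j, 0 ≤ β j ∧ β j ≤ 1) → (∑ j, β j ^ α) = 1 →
        iIndepFun X μ →
        (∀ j, Measurable (X j) ∧ μ.map (X j) = ν) →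
        (μ {ω | C < |∑ j, β j * X j ω|}).toReal ≤ ε :=
  uniform_tightness_weighted_sums_general α M ε hα0 hα2 hε
end

section
/- Let φ be a real-valued characteristic function of a symmetric probability distribution F with M := sup_{x>0} x^α(1 − F(x)) < ∞ for some α ∈ (0,2). Then there is a constant A = A(α) < ∞ such that for all Δ > 0, ∫₀^Δ (1 − φ(uβ)) du ≤ 2·A·M·Δ^{α+1}·β^α for every β ∈ [0,1]. -/
/-!
For `|uβ| ≤ c := Δβ` we have `1 - cos (uβx) ≤ min 2 ((cx)²)`, so the deficiency `1 - φ(uβ)` is at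
most `∫ min 2 ((cx)²) dν`. By the layer-cake formula this is `∫₀² ν{t ≤ (cx)²} dt`, and symmetry
turns the one-sided tail bound into `ν{√t < |cx|} ≤ 2 M c^α t^(-α/2)`, which is integrable on
`(0, 2]` because `α < 2`. So `1 - φ(uβ) ≤ 2 A M (Δβ)^α` uniformly in `u ∈ [0, Δ]`, with
`A = ∫₀² t^(-α/2) dt`, and integrating over `u` contributes the last factor `Δ`.
-/

open MeasureTheory Set

theorem Real.one_sub_cos_le_min_two_sq (x : ℝ) : 1 - Real.cos x ≤ min 2 (x ^ 2) :=
  le_min (by linarith [Real.neg_one_le_cos x])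
    (by nlinarith [Real.one_sub_sq_div_two_le_cos (x := x), sq_nonneg x])

theorem intervalIntegral.integral_le_mul_of_le_const {f : ℝ → ℝ} {a b C : ℝ} (hab : a ≤ b)
    (hC : 0 ≤ C) (hf : ∀ x ∈ Icc a b, f x ≤ C) : ∫ x in a..b, f x ≤ (b - a) * C := by
  by_cases hint : IntervalIntegrable f volume a b
  · calc ∫ x in a..b, f x ≤ ∫ _ in a..b, C :=
        intervalIntegral.integral_mono_on hab hint intervalIntegrable_const hf
      _ = (b - a) * C := by rw [intervalIntegral.integral_const, smul_eq_mul]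
  · rw [intervalIntegral.integral_undef hint]
    exact mul_nonneg (sub_nonneg.2 hab) hC

theorem measure_lt_abs_le_of_map_neg_eq {ν : Measure ℝ} (hsym : ν.map (fun x => -x) = ν)
    (a : ℝ) : ν {x | a < |x|} ≤ 2 * ν (Ioi a) := by
  have hsplit : {x : ℝ | a < |x|} = Ioi a ∪ (fun x => -x) ⁻¹' Ioi a := by
    ext x; simp [lt_abs, lt_neg]
  have hrefl : ν ((fun x => -x) ⁻¹' Ioi a) = ν (Ioi a) := by
    rw [← Measure.map_apply measurable_neg measurableSet_Ioi, hsym]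
  calc ν {x | a < |x|} ≤ ν (Ioi a) + ν ((fun x => -x) ⁻¹' Ioi a) :=
        hsplit ▸ measure_union_le _ _
    _ = 2 * ν (Ioi a) := by rw [hrefl, two_mul]

theorem measureReal_lt_abs_mul_le_of_map_neg_eq {ν : Measure ℝ} [IsFiniteMeasure ν]
    (hsym : ν.map (fun x => -x) = ν) {α M c a : ℝ}
    (hM : ∀ x : ℝ, 0 < x → x ^ α * ν.real (Ioi x) ≤ M) (hc : 0 ≤ c) (ha : 0 < a) :
    ν.real {x | a < |c * x|} ≤ 2 * M * c ^ α * a ^ (-α) := by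
  rcases hc.eq_or_lt with rfl | hc
  · have hM0 : 0 ≤ M := le_trans (by positivity) (hM 1 one_pos)
    have hempty : {x : ℝ | a < |0 * x|} = ∅ := by ext x; simp [ha.le]
    rw [hempty, measureReal_empty]
    positivity
  have hac : 0 < a / c := div_pos ha hc
  have hscale : {x : ℝ | a < |c * x|} = {x | a / c < |x|} := by
    ext x; simp [abs_mul, abs_of_pos hc, div_lt_iff₀ hc, mul_comm]
  have htail : ν.real (Ioi (a / c)) ≤ M * (a / c) ^ (-α) := by
    rw [Real.rpow_neg hac.le, ← div_eq_mul_inv, le_div_iff₀ (by positivity), mul_comm]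
    exact hM _ hac
  calc ν.real {x | a < |c * x|} ≤ 2 * ν.real (Ioi (a / c)) := by
        rw [hscale, measureReal_def, measureReal_def, ← ENNReal.toReal_ofNat,
          ← ENNReal.toReal_mul]
        exact ENNReal.toReal_mono (by finiteness) (measure_lt_abs_le_of_map_neg_eq hsym _)
    _ ≤ 2 * (M * (a / c) ^ (-α)) := by gcongr
    _ = 2 * M * c ^ α * a ^ (-α) := by
        rw [Real.div_rpow ha.le hc.le, Real.rpow_neg hc.le]; field_simp

theorem integral_min_sq_le_of_measureReal_lt_abs_le {Ω : Type*} [MeasurableSpace Ω]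
    {μ : Measure Ω} [IsFiniteMeasure μ] {g : Ω → ℝ} (hg : AEMeasurable g μ) {L K α : ℝ}
    (hL : 0 ≤ L) (hα : α < 2)
    (htail : ∀ a : ℝ, 0 < a → μ.real {x | a < |g x|} ≤ K * a ^ (-α)) :
    ∫ x, min L (g x ^ 2) ∂μ ≤ K * ∫ t in (0 : ℝ)..L, t ^ (-(α / 2)) := by
  have hint : Integrable (fun x => min L (g x ^ 2)) μ :=
    .of_bound (by fun_prop) L (.of_forall fun x => by
      rw [Real.norm_of_nonneg (le_min hL (sq_nonneg _))]; exact min_le_left _ _)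
  have hrpow : IntegrableOn (fun t : ℝ => K * t ^ (-(α / 2))) (Ioc 0 L) :=
    ((intervalIntegrable_iff_integrableOn_Ioc_of_le hL).1
      (intervalIntegral.intervalIntegrable_rpow' (by linarith))).const_mul K
  rw [hint.integral_eq_integral_Ioc_meas_le (.of_forall fun x => le_min hL (sq_nonneg _))
    (.of_forall fun x => min_le_left _ _), ← intervalIntegral.integral_const_mul,
    intervalIntegral.integral_of_le hL]
  refine integral_mono_of_nonneg (.of_forall fun t => measureReal_nonneg) hrpow ?_
  filter_upwards [meas_le_ae_eq_meas_lt μ (volume.restrict (Ioc 0 L)) fun x => min L (g x ^ 2),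
    ae_restrict_mem measurableSet_Ioc] with t hle ht
  have hsub : {x | t < min L (g x ^ 2)} ⊆ {x | √t < |g x|} := fun x hx =>
    Real.sqrt_lt_sqrt ht.1.le (lt_min_iff.1 hx).2 |>.trans_eq (Real.sqrt_sq_eq_abs _)
  calc μ.real {x | t ≤ min L (g x ^ 2)} = μ.real {x | t < min L (g x ^ 2)} := by
        simp only [measureReal_def, hle]
    _ ≤ K * √t ^ (-α) := (measureReal_mono hsub).trans (htail _ (Real.sqrt_pos.2 ht.1))
    _ = K * t ^ (-(α / 2)) := by
        rw [Real.sqrt_eq_rpow, ← Real.rpow_mul ht.1.le]; ring_nf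

theorem one_sub_integral_cos_mul_le {ν : Measure ℝ} [IsProbabilityMeasure ν] {s c : ℝ}
    (hsc : |s| ≤ c) : 1 - ∫ x, Real.cos (s * x) ∂ν ≤ ∫ x, min 2 ((c * x) ^ 2) ∂ν := by
  have hcos : Integrable (fun x => Real.cos (s * x)) ν :=
    .of_bound (by fun_prop) 1 (.of_forall fun x => Real.abs_cos_le_one _)
  have hmin : Integrable (fun x => min 2 ((c * x) ^ 2)) ν :=
    .of_bound (by fun_prop) 2 (.of_forall fun x => by
      rw [Real.norm_of_nonneg (le_min zero_le_two (sq_nonneg _))]; exact min_le_left _ _)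
  have hsq : ∀ x : ℝ, (s * x) ^ 2 ≤ (c * x) ^ 2 := fun x => by
    rw [mul_pow, mul_pow]
    exact mul_le_mul_of_nonneg_right (sq_le_sq.2 (hsc.trans (le_abs_self c))) (sq_nonneg x)
  calc 1 - ∫ x, Real.cos (s * x) ∂ν = ∫ x, (1 - Real.cos (s * x)) ∂ν := by
        rw [integral_sub (integrable_const 1) hcos, integral_const, probReal_univ, one_smul]
    _ ≤ ∫ x, min 2 ((c * x) ^ 2) ∂ν := integral_mono ((integrable_const 1).sub hcos) hmin
        fun x => (Real.one_sub_cos_le_min_two_sq _).trans (min_le_min_left 2 (hsq x))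

theorem char_fn_integrated_deficiency_general (α : ℝ) (hα2 : α < 2) :
    ∃ A : ℝ, ∀ (ν : Measure ℝ), IsProbabilityMeasure ν →
      ν.map (fun x => -x) = ν →
      ∀ M : ℝ, (∀ x : ℝ, 0 < x → x ^ α * (ν (Ioi x)).toReal ≤ M) →
      ∀ (φ : ℝ → ℝ), (∀ u : ℝ, φ u = ∫ x, Real.cos (u * x) ∂ν) →
      ∀ Δ : ℝ, 0 < Δ → ∀ β : ℝ, 0 ≤ β → β ≤ 1 →
        (∫ u in (0:ℝ)..Δ, (1 - φ (u * β))) ≤ 2 * A * M * Δ ^ (α + 1) * β ^ α := by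
  refine ⟨∫ t in (0 : ℝ)..2, t ^ (-(α / 2)), ?_⟩
  intro ν hν hsym M hM φ hφ Δ hΔ β hβ0 _
  set A := ∫ t in (0 : ℝ)..2, t ^ (-(α / 2))
  set c := Δ * β
  have hc : 0 ≤ c := mul_nonneg hΔ.le hβ0
  have hM0 : 0 ≤ M := le_trans (by positivity) (hM 1 one_pos)
  have hA : 0 ≤ A := intervalIntegral.integral_nonneg zero_le_two fun t ht =>
    Real.rpow_nonneg ht.1 _
  have hbound : ∀ u ∈ Icc 0 Δ, 1 - φ (u * β) ≤ 2 * M * c ^ α * A := fun u hu => by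
    have hu : |u * β| ≤ c := by
      rw [abs_of_nonneg (mul_nonneg hu.1 hβ0)]
      exact mul_le_mul_of_nonneg_right hu.2 hβ0
    rw [hφ]
    exact (one_sub_integral_cos_mul_le hu).trans <|
      integral_min_sq_le_of_measureReal_lt_abs_le (by fun_prop) zero_le_two hα2
        fun a ha => measureReal_lt_abs_mul_le_of_map_neg_eq hsym hM hc ha
  calc (∫ u in (0:ℝ)..Δ, (1 - φ (u * β))) ≤ (Δ - 0) * (2 * M * c ^ α * A) :=
        intervalIntegral.integral_le_mul_of_le_const hΔ.le (by positivity) hbound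
    _ = 2 * A * M * Δ ^ (α + 1) * β ^ α := by
        rw [Real.mul_rpow hΔ.le hβ0, Real.rpow_add hΔ, Real.rpow_one]; ring

theorem char_fn_integrated_deficiency (α : ℝ) (hα0 : 0 < α) (hα2 : α < 2) :
    ∃ A : ℝ, ∀ (ν : Measure ℝ), IsProbabilityMeasure ν →
      ν.map (fun x => -x) = ν →
      ∀ M : ℝ, (∀ x : ℝ, 0 < x → x ^ α * (ν (Ioi x)).toReal ≤ M) →
      ∀ (φ : ℝ → ℝ), (∀ u : ℝ, φ u = ∫ x, Real.cos (u * x) ∂ν) →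
      ∀ Δ : ℝ, 0 < Δ → ∀ β : ℝ, 0 ≤ β → β ≤ 1 →
        (∫ u in (0:ℝ)..Δ, (1 - φ (u * β))) ≤ 2 * A * M * Δ ^ (α + 1) * β ^ α :=
  char_fn_integrated_deficiency_general α hα2
end
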